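/- Let k > 0 and let a, b be nonzero real numbers. Then the infimum of (√S + √R)/√(R·S·(2k − R·a² − S·b²)) over all R > 0, S > 0 with R·a² + S·b² < 2k equals k^{−1}·(|a|^{2/3} + |b|^{2/3})^{3/2}, and this infimum is attained at R = k/(|a|^{4/3}·(|a|^{2/3} + |b|^{2/3})) and S = k/(|b|^{4/3}·(|a|^{2/3} + |b|^{2/3})). -/

import Mathlib

/-!
Put `α = |a|^{2/3}`, `β = |b|^{2/3}` (so `α³ = a²`, `β³ = b²`), `u = √R`, `v = √S` and
`P = R a² + S b² = α³u² + β³v²`. The square of the claimed bound reads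
`(α + β)³ u²v² (2k - P) ≤ k² (u + v)²`. It follows by multiplying the Hölder-type inequality
`(α + β)³ u²v² ≤ P (u + v)²` (equality iff `αu = βv`) by `2k - P > 0` and using
`P (2k - P) ≤ k²` (equality iff `P = k`). Both equalities hold at the stated `R, S`.
-/

open Real

/-- The sum `γ + δ` of the two L² gains, as a function of the parameters `R, S`. -/
noncomputable def gainSum (k a b R S : ℝ) : ℝ :=
  (√S + √R) / √(R * S * (2 * k - R * a ^ 2 - S * b ^ 2))

lemma add_pow_three_mul_sq_mul_sq_le {α β u v : ℝ} (hα : 0 ≤ α) (hβ : 0 ≤ β) (hu : 0 ≤ u)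
    (hv : 0 ≤ v) :
    (α + β) ^ 3 * (u ^ 2 * v ^ 2) ≤ (α ^ 3 * u ^ 2 + β ^ 3 * v ^ 2) * (u + v) ^ 2 := by
  have key : (α ^ 3 * u ^ 2 + β ^ 3 * v ^ 2) * (u + v) ^ 2 - (α + β) ^ 3 * (u ^ 2 * v ^ 2) =
      (α * u - β * v) ^ 2 * (v * (2 * α * u + β * v) + u * (α * u + 2 * β * v)) := by ring
  rw [← sub_nonneg, key]
  positivity

lemma add_pow_three_mul_sq_mul_sq_mul_slack_le {k α β u v : ℝ} (hα : 0 ≤ α) (hβ : 0 ≤ β)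
    (hu : 0 ≤ u) (hv : 0 ≤ v) :
    (α + β) ^ 3 * (u ^ 2 * v ^ 2) * (2 * k - α ^ 3 * u ^ 2 - β ^ 3 * v ^ 2) ≤
      k ^ 2 * (u + v) ^ 2 := by
  set P := α ^ 3 * u ^ 2 + β ^ 3 * v ^ 2
  have hP : 2 * k - α ^ 3 * u ^ 2 - β ^ 3 * v ^ 2 = 2 * k - P := by ring
  rw [hP]
  rcases le_or_gt (2 * k - P) 0 with hneg | hpos
  · exact (mul_nonpos_of_nonneg_of_nonpos (by positivity) hneg).trans (by positivity)
  · calc (α + β) ^ 3 * (u ^ 2 * v ^ 2) * (2 * k - P)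
        ≤ P * (u + v) ^ 2 * (2 * k - P) :=
          mul_le_mul_of_nonneg_right (add_pow_three_mul_sq_mul_sq_le hα hβ hu hv) hpos.le
      _ = (k ^ 2 - (k - P) ^ 2) * (u + v) ^ 2 := by ring
      _ ≤ k ^ 2 * (u + v) ^ 2 :=
          mul_le_mul_of_nonneg_right (sub_le_self _ (sq_nonneg _)) (sq_nonneg _)

lemma gainSum_sq_sq (k a b : ℝ) {u v : ℝ} (hu : 0 ≤ u) (hv : 0 ≤ v) :
    gainSum k a b (u ^ 2) (v ^ 2) =
      (v + u) / (u * v * √(2 * k - u ^ 2 * a ^ 2 - v ^ 2 * b ^ 2)) := by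
  rw [gainSum, sqrt_mul (by positivity), sqrt_mul (by positivity), sqrt_sq hu, sqrt_sq hv]

lemma le_gainSum_sq_sq {k a b α β u v : ℝ} (hk : 0 < k) (hα : 0 < α) (hβ : 0 < β)
    (ha : α ^ 3 = a ^ 2) (hb : β ^ 3 = b ^ 2) (hu : 0 < u) (hv : 0 < v)
    (hslack : 0 < 2 * k - u ^ 2 * a ^ 2 - v ^ 2 * b ^ 2) :
    k⁻¹ * √(α + β) ^ 3 ≤ gainSum k a b (u ^ 2) (v ^ 2) := by
  set w := √(2 * k - u ^ 2 * a ^ 2 - v ^ 2 * b ^ 2)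
  have hw : 0 < w := sqrt_pos.2 hslack
  rw [gainSum_sq_sq k a b hu.le hv.le, le_div_iff₀ (by positivity), mul_assoc,
    inv_mul_le_iff₀ hk]
  refine le_of_pow_le_pow_left₀ two_ne_zero (by positivity) ?_
  calc (√(α + β) ^ 3 * (u * v * w)) ^ 2
      = (α + β) ^ 3 * (u ^ 2 * v ^ 2) * (2 * k - α ^ 3 * u ^ 2 - β ^ 3 * v ^ 2) := by
        rw [mul_pow, mul_pow, mul_pow, sq_sqrt hslack.le, pow_right_comm,
          sq_sqrt (by positivity), ha, hb]
        ring
    _ ≤ k ^ 2 * (u + v) ^ 2 := add_pow_three_mul_sq_mul_sq_mul_slack_le hα.le hβ.le hu.le hv.le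
    _ = (k * (v + u)) ^ 2 := by ring

lemma le_gainSum {k a b α β R S : ℝ} (hk : 0 < k) (hα : 0 < α) (hβ : 0 < β)
    (ha : α ^ 3 = a ^ 2) (hb : β ^ 3 = b ^ 2) (hR : 0 < R) (hS : 0 < S)
    (hRS : R * a ^ 2 + S * b ^ 2 < 2 * k) :
    k⁻¹ * √(α + β) ^ 3 ≤ gainSum k a b R S := by
  obtain ⟨u, hu, rfl⟩ : ∃ u, 0 < u ∧ u ^ 2 = R := ⟨√R, sqrt_pos.2 hR, sq_sqrt hR.le⟩
  obtain ⟨v, hv, rfl⟩ : ∃ v, 0 < v ∧ v ^ 2 = S := ⟨√S, sqrt_pos.2 hS, sq_sqrt hS.le⟩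
  exact le_gainSum_sq_sq hk hα hβ ha hb hu hv (by linarith)

lemma optimum_mul_sq_add_mul_sq_eq {k a b α β : ℝ} (hα : 0 < α) (hβ : 0 < β) (ha : α ^ 3 = a ^ 2)
    (hb : β ^ 3 = b ^ 2) :
    k / (α ^ 2 * (α + β)) * a ^ 2 + k / (β ^ 2 * (α + β)) * b ^ 2 = k := by
  rw [← ha, ← hb]
  field_simp

lemma gainSum_optimal {k a b α β : ℝ} (hk : 0 < k) (hα : 0 < α) (hβ : 0 < β)
    (ha : α ^ 3 = a ^ 2) (hb : β ^ 3 = b ^ 2) :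
    gainSum k a b (k / (α ^ 2 * (α + β))) (k / (β ^ 2 * (α + β))) = k⁻¹ * √(α + β) ^ 3 := by
  have hs := sq_sqrt (add_pos hα hβ).le
  have hK := sq_sqrt hk.le
  have hs0 : 0 < √(α + β) := sqrt_pos.2 (add_pos hα hβ)
  have hK0 : 0 < √k := sqrt_pos.2 hk
  have hR : k / (α ^ 2 * (α + β)) = (√k / (α * √(α + β))) ^ 2 := by
    rw [div_pow, mul_pow, hs, hK]
  have hS : k / (β ^ 2 * (α + β)) = (√k / (β * √(α + β))) ^ 2 := by
    rw [div_pow, mul_pow, hs, hK]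
  have hslack : 2 * k - (√k / (α * √(α + β))) ^ 2 * a ^ 2 -
      (√k / (β * √(α + β))) ^ 2 * b ^ 2 = k := by
    rw [← hR, ← hS]; linarith [optimum_mul_sq_add_mul_sq_eq (k := k) hα hβ ha hb]
  rw [hR, hS, gainSum_sq_sq k a b (by positivity) (by positivity), hslack]
  field_simp
  rw [hs, hK]
  ring

lemma abs_rpow_two_div_three_pow_three (x : ℝ) : (|x| ^ ((2 : ℝ) / 3)) ^ 3 = x ^ 2 := by
  rw [← rpow_mul_natCast (abs_nonneg x)]
  norm_num

lemma abs_rpow_four_div_three (x : ℝ) : |x| ^ ((4 : ℝ) / 3) = (|x| ^ ((2 : ℝ) / 3)) ^ 2 := by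
  rw [← rpow_mul_natCast (abs_nonneg x)]
  norm_num

lemma rpow_three_div_two {x : ℝ} (hx : 0 ≤ x) : x ^ ((3 : ℝ) / 2) = √x ^ 3 := by
  rw [sqrt_eq_rpow, ← rpow_mul_natCast hx]
  norm_num

theorem gain_sum_minimization (k a b : ℝ) (hk : 0 < k) (ha : a ≠ 0) (hb : b ≠ 0) :
    (∀ R S : ℝ, 0 < R → 0 < S → R * a ^ 2 + S * b ^ 2 < 2 * k →
      k⁻¹ * (|a| ^ ((2:ℝ)/3) + |b| ^ ((2:ℝ)/3)) ^ ((3:ℝ)/2) ≤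
        (Real.sqrt S + Real.sqrt R) / Real.sqrt (R * S * (2 * k - R * a ^ 2 - S * b ^ 2))) ∧
    (let R := k / (|a| ^ ((4:ℝ)/3) * (|a| ^ ((2:ℝ)/3) + |b| ^ ((2:ℝ)/3)));
     let S := k / (|b| ^ ((4:ℝ)/3) * (|a| ^ ((2:ℝ)/3) + |b| ^ ((2:ℝ)/3)));
     0 < R ∧ 0 < S ∧ R * a ^ 2 + S * b ^ 2 < 2 * k ∧
       (Real.sqrt S + Real.sqrt R) / Real.sqrt (R * S * (2 * k - R * a ^ 2 - S * b ^ 2)) =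
         k⁻¹ * (|a| ^ ((2:ℝ)/3) + |b| ^ ((2:ℝ)/3)) ^ ((3:ℝ)/2)) := by
  have hα : 0 < |a| ^ ((2:ℝ)/3) := rpow_pos_of_pos (abs_pos.2 ha) _
  have hβ : 0 < |b| ^ ((2:ℝ)/3) := rpow_pos_of_pos (abs_pos.2 hb) _
  have hα3 := abs_rpow_two_div_three_pow_three a
  have hβ3 := abs_rpow_two_div_three_pow_three b
  rw [abs_rpow_four_div_three, abs_rpow_four_div_three, rpow_three_div_two (by positivity)]
  refine ⟨fun R S hR hS hRS => le_gainSum hk hα hβ hα3 hβ3 hR hS hRS, by positivity,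
    by positivity, ?_, gainSum_optimal hk hα hβ hα3 hβ3⟩
  linarith [optimum_mul_sq_add_mul_sq_eq (k := k) hα hβ hα3 hβ3]
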